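/- If g : X → ℝ is quasilinear (both quasi-concave and quasi-convex) on a convex set X ⊆ ℝⁿ, and h : ℝ → ℝ is quasi-concave on an interval containing g(X), then the composition h ∘ g is quasi-concave on X. -/

import Mathlib

/-!
A quasilinear `g` keeps `g (t • x + (1 - t) • y)` between `g x` and `g y`, and a quasi-concave `h`
is bounded below by `min (h u) (h v)` on the whole interval between `u` and `v`.
-/

open Set

theorem min_le_of_mem_uIcc {𝕜 β : Type*} [Field 𝕜] [LinearOrder 𝕜] [IsStrictOrderedRing 𝕜]
    [LinearOrder β] {h : 𝕜 → β} {I : Set 𝕜}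
    (hh : ∀ u ∈ I, ∀ v ∈ I, ∀ t ∈ Icc (0 : 𝕜) 1, min (h u) (h v) ≤ h (t * u + (1 - t) * v))
    {u v c : 𝕜} (hu : u ∈ I) (hv : v ∈ I) (hc : c ∈ uIcc u v) :
    min (h u) (h v) ≤ h c := by
  rw [← segment_eq_uIcc] at hc
  obtain ⟨a, b, ha, hb, hab, rfl⟩ := hc
  obtain rfl : b = 1 - a := eq_sub_of_add_eq' hab
  exact hh u hu v hv a ⟨ha, by linarith⟩

theorem stmt_0_general {n : ℕ} (X : Set (Fin n → ℝ))
    (g : (Fin n → ℝ) → ℝ) (h : ℝ → ℝ) (I : Set ℝ)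
    (hgI : g '' X ⊆ I)
    (hg_qcave : ∀ x ∈ X, ∀ y ∈ X, ∀ t ∈ Set.Icc (0:ℝ) 1,
      min (g x) (g y) ≤ g (t • x + (1 - t) • y))
    (hg_qvex : ∀ x ∈ X, ∀ y ∈ X, ∀ t ∈ Set.Icc (0:ℝ) 1,
      g (t • x + (1 - t) • y) ≤ max (g x) (g y))
    (hh_qcave : ∀ u ∈ I, ∀ v ∈ I, ∀ t ∈ Set.Icc (0:ℝ) 1,
      min (h u) (h v) ≤ h (t * u + (1 - t) * v)) :
    ∀ x ∈ X, ∀ y ∈ X, ∀ t ∈ Set.Icc (0:ℝ) 1,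
      min (h (g x)) (h (g y)) ≤ h (g (t • x + (1 - t) • y)) := by
  intro x hx y hy t ht
  have hg_between : g (t • x + (1 - t) • y) ∈ uIcc (g x) (g y) :=
    ⟨hg_qcave x hx y hy t ht, hg_qvex x hx y hy t ht⟩
  exact min_le_of_mem_uIcc hh_qcave (hgI ⟨x, hx, rfl⟩) (hgI ⟨y, hy, rfl⟩) hg_between

/-- Quasilinear `g` composed with quasi-concave `h` is quasi-concave. -/
theorem stmt_0 {n : ℕ} (X : Set (Fin n → ℝ)) (hX : Convex ℝ X)
    (g : (Fin n → ℝ) → ℝ) (h : ℝ → ℝ) (I : Set ℝ) (hI : I.OrdConnected)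
    (hgI : g '' X ⊆ I)
    (hg_qcave : ∀ x ∈ X, ∀ y ∈ X, ∀ t ∈ Set.Icc (0:ℝ) 1,
      min (g x) (g y) ≤ g (t • x + (1 - t) • y))
    (hg_qvex : ∀ x ∈ X, ∀ y ∈ X, ∀ t ∈ Set.Icc (0:ℝ) 1,
      g (t • x + (1 - t) • y) ≤ max (g x) (g y))
    (hh_qcave : ∀ u ∈ I, ∀ v ∈ I, ∀ t ∈ Set.Icc (0:ℝ) 1,
      min (h u) (h v) ≤ h (t * u + (1 - t) * v)) :
    ∀ x ∈ X, ∀ y ∈ X, ∀ t ∈ Set.Icc (0:ℝ) 1,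
      min (h (g x)) (h (g y)) ≤ h (g (t • x + (1 - t) • y)) :=
  stmt_0_general X g h I hgI hg_qcave hg_qvex hh_qcave
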